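/- Let E be a pseudo effect algebra satisfying (RDP) with S(E) ≠ ∅, and let F be a face of S(E). Then the complementary face F′ of F equals the set of all states s′ ∈ S(E) such that s′ ∧ s = 0 (infimum taken in the lattice-ordered group J(E)) for every state s ∈ F; equivalently, F′ consists of all states s′ ∈ S(E) such that whenever s ∈ F and α ≥ 0 satisfy α·s ≤⁺ s′, then α = 0. -/

import Mathlib

universe u v

/-- A pseudo effect algebra: a partial algebra `(E; +, 0, 1)` with a partially defined
binary operation (modelled as `E → E → Option E`) satisfying (i)-(iv). -/
structure PseudoEffectAlgebra (E : Type u) where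
  add : E → E → Option E
  zero : E
  one : E
  /-- (i) `a+b` and `(a+b)+c` exist iff `b+c` and `a+(b+c)` exist, and then they are equal. -/
  assoc : ∀ a b c x : E,
    (∃ ab, add a b = some ab ∧ add ab c = some x) ↔
    (∃ bc, add b c = some bc ∧ add a bc = some x)
  /-- (ii) there is exactly one `d` with `a + d = 1`. -/
  rinv : ∀ a : E, ∃! d, add a d = some one
  /-- (ii) there is exactly one `e` with `e + a = 1`. -/
  linv : ∀ a : E, ∃! e, add e a = some one
  /-- (iii) if `a+b` exists there are `d, e` with `a+b = d+a = b+e`. -/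
  com_ex : ∀ a b ab : E, add a b = some ab →
    (∃ d, add d a = some ab) ∧ (∃ e, add b e = some ab)
  /-- (iv) if `1 + a` exists then `a = 0`. -/
  one_add : ∀ a x : E, add one a = some x → a = zero
  /-- (iv) if `a + 1` exists then `a = 0`. -/
  add_one : ∀ a x : E, add a one = some x → a = zero

namespace PseudoEffectAlgebra

variable {E : Type u}

/-- `a ≤ b` iff `a + c = b` for some `c`. -/
def le (P : PseudoEffectAlgebra E) (a b : E) : Prop := ∃ c, P.add a c = some b

/-- The Riesz Decomposition Property (RDP). -/
def RDP (P : PseudoEffectAlgebra E) : Prop :=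
  ∀ a₁ a₂ b₁ b₂ x : E, P.add a₁ a₂ = some x → P.add b₁ b₂ = some x →
    ∃ d₁ d₂ d₃ d₄, P.add d₁ d₂ = some a₁ ∧ P.add d₃ d₄ = some a₂ ∧
      P.add d₁ d₃ = some b₁ ∧ P.add d₂ d₄ = some b₂

/-- A pseudo effect algebra with commutative `+` is an effect algebra. -/
def Commutative (P : PseudoEffectAlgebra E) : Prop := ∀ a b : E, P.add a b = P.add b a

/-- A signed measure: additive on existing sums. -/
def IsSignedMeasure (P : PseudoEffectAlgebra E) (m : E → ℝ) : Prop :=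
  ∀ a b ab : E, P.add a b = some ab → m ab = m a + m b

/-- A measure: a nonnegative signed measure. -/
def IsMeasure (P : PseudoEffectAlgebra E) (m : E → ℝ) : Prop :=
  IsSignedMeasure P m ∧ ∀ a : E, 0 ≤ m a

/-- A state: a normalized measure. -/
def IsState (P : PseudoEffectAlgebra E) (s : E → ℝ) : Prop :=
  IsMeasure P s ∧ s P.one = 1

/-- A Jordan signed measure: a difference of two measures. -/
def IsJordan (P : PseudoEffectAlgebra E) (m : E → ℝ) : Prop :=
  ∃ m₁ m₂ : E → ℝ, IsMeasure P m₁ ∧ IsMeasure P m₂ ∧ m = m₁ - m₂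

/-- `J(E)`, the set of Jordan signed measures. -/
def Jordan (P : PseudoEffectAlgebra E) : Set (E → ℝ) := {m | IsJordan P m}

/-- `M⁺(E)`, the set of measures. -/
def Measures (P : PseudoEffectAlgebra E) : Set (E → ℝ) := {m | IsMeasure P m}

/-- `S(E)`, the set of states. -/
def States (P : PseudoEffectAlgebra E) : Set (E → ℝ) := {s | IsState P s}

/-- `sup` is the least upper bound of `S` computed within the subset `J`
(with the pointwise order `≤⁺` on functions). -/
def IsLubIn (J S : Set (E → ℝ)) (sup : E → ℝ) : Prop :=
  sup ∈ J ∧ (∀ m ∈ S, m ≤ sup) ∧ ∀ b ∈ J, (∀ m ∈ S, m ≤ b) → sup ≤ b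

/-- `inf` is the greatest lower bound of `S` computed within the subset `J`. -/
def IsGlbIn (J S : Set (E → ℝ)) (inf : E → ℝ) : Prop :=
  inf ∈ J ∧ (∀ m ∈ S, inf ≤ m) ∧ ∀ b ∈ J, (∀ m ∈ S, b ≤ m) → b ≤ inf

/-- `SumList P [x₁, …, xₙ] x` means the sum `x₁ + ⋯ + xₙ` is defined in `E` and equals `x`. -/
inductive SumList (P : PseudoEffectAlgebra E) : List E → E → Prop
  | single (a : E) : SumList P [a] a
  | cons {l : List E} {b : E} (a ab : E) :
      SumList P l b → P.add a b = some ab → SumList P (a :: l) ab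

/-- A face of a convex set `K`: a convex extreme subset. -/
def IsFace (K F : Set (E → ℝ)) : Prop := Convex ℝ F ∧ IsExtreme ℝ K F

/-- The complementary face `F'` of `F` in `K`: the union of all faces of `K` disjoint from `F`. -/
def ComplFace (K F : Set (E → ℝ)) : Set (E → ℝ) :=
  ⋃₀ {G | IsFace K G ∧ Disjoint G F}

/-- The cone `V(F) = {α s : α ≥ 0, s ∈ F}` generated by a subset `F` of the state space. -/
def VCone (F : Set (E → ℝ)) : Set (E → ℝ) :=
  {m | ∃ α : ℝ, 0 ≤ α ∧ ∃ s ∈ F, m = α • s}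

/-- `V(F)` is `∨`-closed: for every chain in `V(F)` bounded above in `M⁺(E)`,
the supremum taken in `J(E)` belongs to `V(F)`. -/
def VeeClosed (P : PseudoEffectAlgebra E) (F : Set (E → ℝ)) : Prop :=
  ∀ C : Set (E → ℝ), C ⊆ VCone F → C.Nonempty → IsChain (· ≤ ·) C →
    (∃ b ∈ Measures P, ∀ m ∈ C, m ≤ b) →
    ∀ msup : E → ℝ, IsLubIn (Jordan P) C msup → msup ∈ VCone F

/-- `a` is the supremum of `S ⊆ E` in the partial order of `E`. -/
def IsLUBe (P : PseudoEffectAlgebra E) (S : Set E) (a : E) : Prop :=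
  (∀ x ∈ S, P.le x a) ∧ ∀ b : E, (∀ x ∈ S, P.le x b) → P.le a b

/-- A σ-additive (signed) measure. -/
def SigmaAdditive (P : PseudoEffectAlgebra E) (m : E → ℝ) : Prop :=
  ∀ (a_ : ℕ → E) (a : E), (∀ n : ℕ, P.le (a_ n) (a_ (n + 1))) →
    IsLUBe P (Set.range a_) a →
    Filter.Tendsto (fun n => m (a_ n)) Filter.atTop (nhds (m a))

/-- An upwards continuous (signed) measure: `{a_t} ↑ a` implies `{m(a_t)} ↑ m(a)`. -/
def UpwardsContinuous (P : PseudoEffectAlgebra E) (m : E → ℝ) : Prop :=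
  ∀ {T : Type v} [Nonempty T] (a_ : T → E) (a : E),
    (∀ s t : T, ∃ r : T, P.le (a_ s) (a_ r) ∧ P.le (a_ t) (a_ r)) →
    IsLUBe P (Set.range a_) a →
    IsLUB (Set.range fun t => m (a_ t)) (m a)

/-- The system `{a_t}_{t ∈ T}` is summable with sum `a`: every finite subsystem
(coded by a duplicate-free list) has a sum in `E`, and `a` is the supremum of
all such finite partial sums. -/
def IsSummableSum (P : PseudoEffectAlgebra E) {T : Type v} (a_ : T → E) (a : E) : Prop :=
  (∀ l : List T, l ≠ [] → l.Nodup → ∃ x : E, SumList P (l.map a_) x) ∧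
  IsLUBe P {x : E | ∃ l : List T, l.Nodup ∧ SumList P (l.map a_) x} a

/-- A completely additive (signed) measure: whenever `a = Σ_{t∈T} a_t`, the value `m a`
is the supremum of the finite partial sums `Σ_{t∈F} m (a_t)`. -/
def CompletelyAdditive (P : PseudoEffectAlgebra E) (m : E → ℝ) : Prop :=
  ∀ {T : Type v} (a_ : T → E) (a : E), IsSummableSum P a_ a →
    IsLUB {r : ℝ | ∃ l : List T, l.Nodup ∧ r = (l.map (fun t => m (a_ t))).sum} (m a)

/-- An ideal of a pseudo effect algebra. -/
def IsIdeal (P : PseudoEffectAlgebra E) (I : Set E) : Prop :=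
  P.zero ∈ I ∧
  (∀ a ∈ I, ∀ b ∈ I, ∀ ab : E, P.add a b = some ab → ab ∈ I) ∧
  (∀ a b : E, b ∈ I → P.le a b → a ∈ I)

/-- A normal ideal: `a + I = I + a` for all `a`. -/
def IsNormalIdeal (P : PseudoEffectAlgebra E) (I : Set E) : Prop :=
  IsIdeal P I ∧
  ∀ a : E, {x : E | ∃ b ∈ I, P.add a b = some x} = {x : E | ∃ b ∈ I, P.add b a = some x}

/-- `m₁ ≪_ε m₂`: `m₁` is `m₂`-continuous. -/
def EpsCont (m₁ m₂ : E → ℝ) : Prop :=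
  ∀ ε : ℝ, 0 < ε → ∃ δ : ℝ, 0 < δ ∧ ∀ a : E, m₂ a < δ → m₁ a < ε

/-- `m₁ ≪ m₂`: `m₁` is absolutely continuous with respect to `m₂`. -/
def AbsCont (m₁ m₂ : E → ℝ) : Prop := ∀ a : E, m₂ a = 0 → m₁ a = 0

/-- `a⁻ = 1 ⧵ a`, the unique element with `a⁻ + a = 1`. -/
noncomputable def lneg (P : PseudoEffectAlgebra E) (a : E) : E := (P.linv a).exists.choose

/-- `a` is central (Boolean): `a ∧ a⁻ = 0`. -/
def IsCentral (P : PseudoEffectAlgebra E) (a : E) : Prop :=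
  ∀ x : E, P.le x a → P.le x (lneg P a) → x = P.zero

/-- `E` is monotone σ-complete. -/
def MonotoneSigmaComplete (P : PseudoEffectAlgebra E) : Prop :=
  ∀ a_ : ℕ → E, (∀ n : ℕ, P.le (a_ n) (a_ (n + 1))) → ∃ a : E, IsLUBe P (Set.range a_) a

/-- `m ⊥ t`: there is `a ∈ E` with `t a = 0` and `m a⁻ = 0`. -/
def Perp (P : PseudoEffectAlgebra E) (m t : E → ℝ) : Prop :=
  ∃ a : E, t a = 0 ∧ m (lneg P a) = 0

/-- Unique decomposition of every measure `m` as `m = m₁ + m₂` with `m₁` a measure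
satisfying `Q` and `m₂` a measure singular with respect to the measures satisfying `Q`. -/
def MeasDecomp (P : PseudoEffectAlgebra E) (Q : (E → ℝ) → Prop) : Prop :=
  ∀ m ∈ Measures P, ∃ m₁ m₂ : E → ℝ,
    (IsMeasure P m₁ ∧ Q m₁) ∧ IsMeasure P m₂ ∧
    (∀ t : E → ℝ, IsMeasure P t → Q t → t ≤ m₂ → t = 0) ∧
    m = m₁ + m₂ ∧
    (∀ m₁' m₂' : E → ℝ, (IsMeasure P m₁' ∧ Q m₁') → IsMeasure P m₂' →
      (∀ t : E → ℝ, IsMeasure P t → Q t → t ≤ m₂' → t = 0) →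
      m = m₁' + m₂' → m₁' = m₁ ∧ m₂' = m₂)

/-- Unique convex decomposition of every state `s` as `s = λ₁ s₁ + λ₂ s₂` with `s₁` a state
satisfying `Q` and `s₂` a state such that `α s' ≤⁺ s₂` with `s'` a state satisfying `Q`
and `α ≥ 0` forces `α = 0`. -/
def StateDecomp (P : PseudoEffectAlgebra E) (Q : (E → ℝ) → Prop) : Prop :=
  ∀ s ∈ States P, ∃ l₁ l₂ : ℝ, 0 ≤ l₁ ∧ 0 ≤ l₂ ∧ l₁ + l₂ = 1 ∧
    ∃ s₁ s₂ : E → ℝ,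
      (IsState P s₁ ∧ Q s₁) ∧ IsState P s₂ ∧
      (∀ (s' : E → ℝ) (α : ℝ), IsState P s' → Q s' → 0 ≤ α → α • s' ≤ s₂ → α = 0) ∧
      s = l₁ • s₁ + l₂ • s₂ ∧
      (∀ (μ₁ μ₂ : ℝ) (s₁' s₂' : E → ℝ), 0 ≤ μ₁ → 0 ≤ μ₂ → μ₁ + μ₂ = 1 →
        (IsState P s₁' ∧ Q s₁') → IsState P s₂' →
        (∀ (s' : E → ℝ) (α : ℝ), IsState P s' → Q s' → 0 ≤ α → α • s' ≤ s₂' → α = 0) →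
        s = μ₁ • s₁' + μ₂ • s₂' →
        μ₁ = l₁ ∧ μ₂ = l₂ ∧ (l₁ ≠ 0 → s₁' = s₁) ∧ (l₂ ≠ 0 → s₂' = s₂))

end PseudoEffectAlgebra

open PseudoEffectAlgebra

/-!
Let `B` be the set of states `s'` that dominate no nonzero multiple `α • s` of a state `s ∈ F`.
A face `G` containing `s'` and a state `s` with `α • s ≤⁺ s'`, `α > 0`, must contain `s`: a
measure below a state of a face is a multiple of a state of that face. Hence every face disjoint
from `F` lies in `B`. Conversely `B` is itself a face disjoint from `F`; convexity rests on the
Riesz decomposition of measures, which (RDP) provides: if `α • s ≤⁺ a • x + b • y` then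
`α • s = m₁ + m₂` with `m₁ ≤⁺ a • x`, `m₂ ≤⁺ b • y`, and each `mᵢ`, lying below `s`, is a multiple
of a state of `F`, hence zero. So `F' = B`. Finally, the infimum of two measures `m`, `u` in `J(E)`
is the measure `a ↦ inf {m x + u y | x + y = a}`; for `s' ∧ s` it lies below `s`, so it is a
multiple of a state of `F`, and it vanishes exactly when `s' ∈ B`.
-/

namespace PseudoEffectAlgebra

variable {E : Type u}

section Algebra

variable (P : PseudoEffectAlgebra E)

theorem one_add_zero : P.add P.one P.zero = some P.one := by
  obtain ⟨d, hd, -⟩ := P.rinv P.one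
  rwa [P.one_add d P.one hd] at hd

theorem zero_add_one : P.add P.zero P.one = some P.one := by
  obtain ⟨e, he, -⟩ := P.linv P.one
  rwa [P.add_one e P.one he] at he

theorem add_zero_eq (a : E) : P.add a P.zero = some a := by
  obtain ⟨e, he, -⟩ := P.linv a
  obtain ⟨b, hab, heb⟩ := (P.assoc e a P.zero P.one).1 ⟨P.one, he, P.one_add_zero⟩
  obtain ⟨d, -, hd⟩ := P.rinv e
  rwa [hd b heb, ← hd a he] at hab

theorem zero_add_eq (a : E) : P.add P.zero a = some a := by
  obtain ⟨d, hd, -⟩ := P.rinv a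
  obtain ⟨b, hab, hbd⟩ := (P.assoc P.zero a d P.one).2 ⟨P.one, hd, P.zero_add_one⟩
  obtain ⟨e, -, he⟩ := P.linv d
  rwa [he b hbd, ← he a hd] at hab

/-- The sum `(x₁ + y₁) + (x₂ + y₂)` can be regrouped as `(x₁ + d) + (y₁ + y₂)`, where `d` is the
conjugate of `x₂` by `y₁`, i.e. `d + y₁ = y₁ + x₂`. -/
theorem exists_add_regroup {x₁ y₁ a x₂ y₂ b c : E}
    (h₁ : P.add x₁ y₁ = some a) (h₂ : P.add x₂ y₂ = some b) (h : P.add a b = some c) :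
    ∃ X Y d e, P.add d y₁ = some e ∧ P.add y₁ x₂ = some e ∧
      P.add x₁ d = some X ∧ P.add y₁ y₂ = some Y ∧ P.add X Y = some c := by
  obtain ⟨f, hf, hx₁f⟩ := (P.assoc x₁ y₁ b c).1 ⟨a, h₁, h⟩
  obtain ⟨e, he, hey₂⟩ := (P.assoc y₁ x₂ y₂ f).2 ⟨b, h₂, hf⟩
  obtain ⟨⟨d, hd⟩, -⟩ := P.com_ex y₁ x₂ e he
  obtain ⟨Y, hY, hdY⟩ := (P.assoc d y₁ y₂ f).1 ⟨e, hd, hey₂⟩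
  obtain ⟨X, hX, hXY⟩ := (P.assoc x₁ d Y c).2 ⟨f, hdY, hx₁f⟩
  exact ⟨X, Y, d, e, hd, he, hX, hY, hXY⟩

end Algebra

variable {P : PseudoEffectAlgebra E}

section Measures

theorem IsSignedMeasure.map_zero {m : E → ℝ} (hm : IsSignedMeasure P m) : m P.zero = 0 := by
  have h := hm P.zero P.zero P.zero (P.add_zero_eq P.zero)
  linarith

theorem IsSignedMeasure.of_mem_jordan {m : E → ℝ} (hm : m ∈ Jordan P) : IsSignedMeasure P m := by
  obtain ⟨m₁, m₂, h₁, h₂, rfl⟩ := hm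
  intro a b ab h
  simp only [Pi.sub_apply, h₁.1 a b ab h, h₂.1 a b ab h]
  ring

theorem IsMeasure.le_of_add_left {m : E → ℝ} (hm : IsMeasure P m) {x y a : E}
    (h : P.add x y = some a) : m x ≤ m a := by
  linarith [hm.1 x y a h, hm.2 y]

theorem IsMeasure.le_of_add_right {m : E → ℝ} (hm : IsMeasure P m) {x y a : E}
    (h : P.add x y = some a) : m y ≤ m a := by
  linarith [hm.1 x y a h, hm.2 x]

theorem IsMeasure.eq_zero_of_map_one {m : E → ℝ} (hm : IsMeasure P m) (h : m P.one = 0) :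
    m = 0 := by
  funext a
  obtain ⟨d, hd, -⟩ := P.rinv a
  simp only [Pi.zero_apply]
  linarith [hm.le_of_add_left hd, hm.2 a]

theorem isMeasure_zero : IsMeasure P 0 :=
  ⟨fun _ _ _ _ => by simp, fun _ => le_rfl⟩

theorem IsMeasure.smul {m : E → ℝ} (hm : IsMeasure P m) {α : ℝ} (hα : 0 ≤ α) :
    IsMeasure P (α • m) := by
  refine ⟨fun a b ab h => ?_, fun a => mul_nonneg hα (hm.2 a)⟩
  simp only [Pi.smul_apply, smul_eq_mul, hm.1 a b ab h]
  ring

theorem IsMeasure.add {m u : E → ℝ} (hm : IsMeasure P m) (hu : IsMeasure P u) :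
    IsMeasure P (m + u) := by
  refine ⟨fun a b ab h => ?_, fun a => add_nonneg (hm.2 a) (hu.2 a)⟩
  simp only [Pi.add_apply, hm.1 a b ab h, hu.1 a b ab h]
  ring

theorem IsSignedMeasure.isMeasure_sub {m u : E → ℝ} (hm : IsSignedMeasure P m)
    (hu : IsSignedMeasure P u) (h : u ≤ m) : IsMeasure P (m - u) := by
  refine ⟨fun a b ab hab => ?_, fun a => sub_nonneg.2 (h a)⟩
  simp only [Pi.sub_apply, hm a b ab hab, hu a b ab hab]
  ring

theorem IsMeasure.mem_jordan {m : E → ℝ} (hm : IsMeasure P m) : m ∈ Jordan P :=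
  ⟨m, 0, hm, isMeasure_zero, by simp⟩

end Measures

section InfMeasure

variable (P) in
/-- The infimum `m ∧ u` of two measures in `J(E)` (under RDP). -/
noncomputable def infMeasure (m u : E → ℝ) (a : E) : ℝ :=
  sInf {r | ∃ x y, P.add x y = some a ∧ r = m x + u y}

variable {m u : E → ℝ}

theorem infMeasure_le (hm : IsMeasure P m) (hu : IsMeasure P u) {x y a : E}
    (h : P.add x y = some a) : infMeasure P m u a ≤ m x + u y := by
  refine csInf_le ⟨0, ?_⟩ ⟨x, y, h, rfl⟩
  rintro r ⟨x, y, -, rfl⟩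
  exact add_nonneg (hm.2 x) (hu.2 y)

theorem le_infMeasure {a : E} {c : ℝ} (h : ∀ x y, P.add x y = some a → c ≤ m x + u y) :
    c ≤ infMeasure P m u a := by
  refine le_csInf ⟨m a + u P.zero, a, P.zero, P.add_zero_eq a, rfl⟩ ?_
  rintro r ⟨x, y, hxy, rfl⟩
  exact h x y hxy

theorem infMeasure_le_left (hm : IsMeasure P m) (hu : IsMeasure P u) (a : E) :
    infMeasure P m u a ≤ m a := by
  simpa [hu.1.map_zero] using infMeasure_le hm hu (P.add_zero_eq a)

theorem infMeasure_le_right (hm : IsMeasure P m) (hu : IsMeasure P u) (a : E) :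
    infMeasure P m u a ≤ u a := by
  simpa [hm.1.map_zero] using infMeasure_le hm hu (P.zero_add_eq a)

theorem le_infMeasure_of_le {b : E → ℝ} (hb : IsSignedMeasure P b) (hbm : b ≤ m) (hbu : b ≤ u)
    (a : E) : b a ≤ infMeasure P m u a :=
  le_infMeasure fun x y h => by linarith [hb x y a h, hbm x, hbu y]

theorem infMeasure_add_le (hm : IsMeasure P m) (hu : IsMeasure P u) {a c x : E}
    (hx : P.add a c = some x) :
    infMeasure P m u x ≤ infMeasure P m u a + infMeasure P m u c := by
  have key : ∀ x₁ y₁ x₂ y₂, P.add x₁ y₁ = some a → P.add x₂ y₂ = some c →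
      infMeasure P m u x ≤ (m x₁ + u y₁) + (m x₂ + u y₂) := by
    intro x₁ y₁ x₂ y₂ h₁ h₂
    obtain ⟨X, Y, d, e, hd, he, hX, hY, hXY⟩ := P.exists_add_regroup h₁ h₂ hx
    have hmd : m d = m x₂ := by linarith [hm.1 d y₁ e hd, hm.1 y₁ x₂ e he]
    calc infMeasure P m u x ≤ m X + u Y := infMeasure_le hm hu hXY
      _ = (m x₁ + u y₁) + (m x₂ + u y₂) := by
        rw [hm.1 x₁ d X hX, hu.1 y₁ y₂ Y hY, hmd]
        ring
  have hc : infMeasure P m u x - infMeasure P m u a ≤ infMeasure P m u c :=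
    le_infMeasure fun x₂ y₂ h₂ => by
      have ha : infMeasure P m u x - (m x₂ + u y₂) ≤ infMeasure P m u a :=
        le_infMeasure fun x₁ y₁ h₁ => by linarith [key x₁ y₁ x₂ y₂ h₁ h₂]
      linarith
  linarith

theorem le_infMeasure_add (hRDP : P.RDP) (hm : IsMeasure P m) (hu : IsMeasure P u) {a c x : E}
    (hx : P.add a c = some x) :
    infMeasure P m u a + infMeasure P m u c ≤ infMeasure P m u x :=
  le_infMeasure fun X Y hXY => by
    obtain ⟨d₁, d₂, d₃, d₄, h₁₂, h₃₄, h₁₃, h₂₄⟩ := hRDP X Y a c x hXY hx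
    linarith [infMeasure_le hm hu h₁₃, infMeasure_le hm hu h₂₄, hm.1 d₁ d₂ X h₁₂,
      hu.1 d₃ d₄ Y h₃₄]

theorem isMeasure_infMeasure (hRDP : P.RDP) (hm : IsMeasure P m) (hu : IsMeasure P u) :
    IsMeasure P (infMeasure P m u) :=
  ⟨fun _ _ _ hx => le_antisymm (infMeasure_add_le hm hu hx) (le_infMeasure_add hRDP hm hu hx),
    fun _ => le_infMeasure fun x y _ => add_nonneg (hm.2 x) (hu.2 y)⟩

/-- Riesz decomposition for measures. -/
theorem IsMeasure.exists_add_eq_of_le_add (hRDP : P.RDP) {v : E → ℝ} (hm : IsMeasure P m)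
    (hu : IsMeasure P u) (hv : IsMeasure P v) (h : m ≤ u + v) :
    ∃ m₁ m₂, IsMeasure P m₁ ∧ IsMeasure P m₂ ∧ m₁ ≤ u ∧ m₂ ≤ v ∧ m = m₁ + m₂ := by
  have hinf := isMeasure_infMeasure hRDP hm hu
  have hle : infMeasure P m u ≤ m := infMeasure_le_left hm hu
  refine ⟨_, _, hinf, hm.1.isMeasure_sub hinf.1 hle, infMeasure_le_right hm hu, fun a => ?_,
    (add_sub_cancel _ _).symm⟩
  have : m a - v a ≤ infMeasure P m u a := le_infMeasure fun x y hxy => by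
    linarith [hm.1 x y a hxy, show m y ≤ u y + v y from h y, hv.le_of_add_right hxy]
  simp only [Pi.sub_apply]
  linarith

end InfMeasure

section States

theorem convex_states : Convex ℝ (States P) := by
  intro s hs t ht a b ha hb hab
  refine ⟨(hs.1.smul ha).add (ht.1.smul hb), ?_⟩
  simp [hs.2, ht.2, hab]

theorem isState_inv_smul {m : E → ℝ} (hm : IsMeasure P m) (h : m P.one ≠ 0) :
    IsState P ((m P.one)⁻¹ • m) :=
  ⟨hm.smul (inv_nonneg.2 (hm.2 _)), by simp [h]⟩

theorem le_one_of_smul_le {s s' : E → ℝ} (hs : IsState P s) (hs' : IsState P s') {α : ℝ}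
    (h : α • s ≤ s') : α ≤ 1 := by
  simpa [hs.2, hs'.2] using h P.one

theorem IsState.smul_le_self {s : E → ℝ} (hs : IsState P s) {α : ℝ} (h : α ≤ 1) :
    α • s ≤ s := fun a => by
  simpa using mul_le_of_le_one_left (hs.1.2 a) h

theorem IsFace.exists_eq_smul_of_le {F : Set (E → ℝ)} (hF : IsFace (States P) F)
    {m s : E → ℝ} (hm : IsMeasure P m) (hs : s ∈ F) (hms : m ≤ s) :
    ∃ t ∈ F, m = m P.one • t := by
  have hsS : IsState P s := hF.2.subset hs
  have hsm : IsMeasure P (s - m) := hsS.1.1.isMeasure_sub hm.1 hms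
  rcases (hm.2 P.one).eq_or_lt with h0 | h0
  · exact ⟨s, hs, by rw [← h0, zero_smul, hm.eq_zero_of_map_one h0.symm]⟩
  rcases (show m P.one ≤ 1 from hsS.2 ▸ hms P.one).eq_or_lt with h1 | h1
  · have : s - m = 0 := hsm.eq_zero_of_map_one (by simp [hsS.2, h1])
    exact ⟨s, hs, by rw [h1, one_smul, sub_eq_zero.1 this]⟩
  have hsm1 : (s - m) P.one = 1 - m P.one := by simp [hsS.2]
  have hseg : s ∈ openSegment ℝ ((m P.one)⁻¹ • m) (((s - m) P.one)⁻¹ • (s - m)) := by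
    refine ⟨m P.one, 1 - m P.one, h0, by linarith, by ring, ?_⟩
    rw [hsm1, smul_inv_smul₀ h0.ne', smul_inv_smul₀ (by linarith), add_sub_cancel]
  refine ⟨_, hF.2.left_mem_of_mem_openSegment (isState_inv_smul hm h0.ne')
    (isState_inv_smul hsm (by linarith)) hs hseg, ?_⟩
  rw [smul_inv_smul₀ h0.ne']

end States

section SingularStates

variable (P) in
def singularStates (F : Set (E → ℝ)) : Set (E → ℝ) :=
  {s' | s' ∈ States P ∧ ∀ s ∈ F, ∀ α : ℝ, 0 ≤ α → α • s ≤ s' → α = 0}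

variable {F : Set (E → ℝ)}

theorem disjoint_singularStates : Disjoint (singularStates P F) F :=
  Set.disjoint_left.2 fun s hs hsF => one_ne_zero (hs.2 s hsF 1 zero_le_one (one_smul ℝ s).le)

theorem mem_singularStates_of_smul_le {x z : E → ℝ} (hx : x ∈ States P) {c : ℝ} (hc : 0 < c)
    (hxz : c • x ≤ z) (hz : z ∈ singularStates P F) : x ∈ singularStates P F := by
  refine ⟨hx, fun s hs α hα hsx => ?_⟩
  have hle : (c * α) • s ≤ z :=
    calc (c * α) • s = c • (α • s) := mul_smul c α s
      _ ≤ c • x := smul_le_smul_of_nonneg_left hsx hc.le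
      _ ≤ z := hxz
  exact (mul_eq_zero.1 (hz.2 s hs _ (by positivity) hle)).resolve_left hc.ne'

theorem IsMeasure.eq_zero_of_le_of_le_smul (hF : IsFace (States P) F) {m s x : E → ℝ}
    (hm : IsMeasure P m) (hs : s ∈ F) (hms : m ≤ s) (hx : x ∈ singularStates P F) {a : ℝ}
    (ha : 0 ≤ a) (hmx : m ≤ a • x) : m = 0 := by
  obtain ⟨t, ht, hmt⟩ := hF.exists_eq_smul_of_le hm hs hms
  refine hm.eq_zero_of_map_one ?_
  rcases ha.eq_or_lt with rfl | ha
  · exact le_antisymm (by simpa using hmx P.one) (hm.2 P.one)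
  have hle : (a⁻¹ * m P.one) • t ≤ x := fun e => by
    have := hmx e
    rw [hmt] at this
    simp only [Pi.smul_apply, smul_eq_mul] at this ⊢
    rw [mul_assoc, inv_mul_le_iff₀ ha]
    exact this
  simpa [ha.ne'] using hx.2 t ht _ (mul_nonneg (inv_nonneg.2 ha.le) (hm.2 _)) hle

theorem isFace_singularStates (hRDP : P.RDP) (hF : IsFace (States P) F) :
    IsFace (States P) (singularStates P F) := by
  refine ⟨fun x hx y hy a b ha hb hab => ⟨convex_states hx.1 hy.1 ha hb hab, ?_⟩,
    ⟨fun _ h => h.1, fun x₁ hx₁ x₂ hx₂ z hz ⟨a, b, ha, hb, _, hz'⟩ =>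
      mem_singularStates_of_smul_le hx₁ ha
        (hz' ▸ le_add_of_nonneg_right (hx₂.1.smul hb.le).2) hz⟩⟩
  intro s hs α hα hle
  have hsS : IsState P s := hF.2.subset hs
  obtain ⟨m₁, m₂, hm₁, hm₂, hm₁x, hm₂y, hsum⟩ := (hsS.1.smul hα).exists_add_eq_of_le_add hRDP
    (hx.1.1.smul ha) (hy.1.1.smul hb) hle
  have hαs : α • s ≤ s :=
    hsS.smul_le_self (le_one_of_smul_le hsS (convex_states hx.1 hy.1 ha hb hab) hle)
  have hm₁s : m₁ ≤ s := (le_add_of_nonneg_right hm₂.2).trans (hsum.symm.trans_le hαs)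
  have hm₂s : m₂ ≤ s := (le_add_of_nonneg_left hm₁.2).trans (hsum.symm.trans_le hαs)
  have hzero : α • s = 0 := by
    rw [hsum, hm₁.eq_zero_of_le_of_le_smul hF hs hm₁s hx ha hm₁x,
      hm₂.eq_zero_of_le_of_le_smul hF hs hm₂s hy hb hm₂y, add_zero]
  simpa [hsS.2] using congrFun hzero P.one

theorem IsFace.subset_singularStates {G : Set (E → ℝ)} (hG : IsFace (States P) G)
    (hGF : Disjoint G F) (hF : F ⊆ States P) : G ⊆ singularStates P F := by
  refine fun s' hs' => ⟨hG.2.subset hs', fun s hs α hα hle => by_contra fun hα0 => ?_⟩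
  have hsS : IsState P s := hF hs
  obtain ⟨t, ht, hst⟩ := hG.exists_eq_smul_of_le (hsS.1.smul hα) hs' hle
  have : s = t := smul_right_injective _ hα0 (by simpa [hsS.2] using hst)
  exact Set.disjoint_left.1 hGF (this ▸ ht) hs

theorem complFace_eq_singularStates (hRDP : P.RDP) (hF : IsFace (States P) F) :
    ComplFace (States P) F = singularStates P F :=
  (Set.sUnion_subset fun _ hG => hG.1.subset_singularStates hG.2 hF.2.subset).antisymm
    (Set.subset_sUnion_of_mem ⟨isFace_singularStates hRDP hF, disjoint_singularStates⟩)

theorem eq_zero_of_isGlbIn_of_smul_le {s s' : E → ℝ} (hs : IsState P s) (hs' : IsState P s')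
    (hglb : IsGlbIn (Jordan P) {s', s} 0) {α : ℝ} (hα : 0 ≤ α) (hle : α • s ≤ s') : α = 0 := by
  have hαs := hs.smul_le_self (le_one_of_smul_le hs hs' hle)
  have := hglb.2.2 _ (hs.1.smul hα).mem_jordan (by simp [hle, hαs]) P.one
  simp only [Pi.smul_apply, smul_eq_mul, hs.2, mul_one, Pi.zero_apply] at this
  linarith

theorem isGlbIn_of_mem_singularStates (hRDP : P.RDP) (hF : IsFace (States P) F)
    {s s' : E → ℝ} (hs' : s' ∈ singularStates P F) (hs : s ∈ F) :
    IsGlbIn (Jordan P) {s', s} 0 := by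
  have hsS : IsState P s := hF.2.subset hs
  refine ⟨isMeasure_zero.mem_jordan, ?_, fun b hb hlb => ?_⟩
  · rintro m (rfl | rfl)
    exacts [hs'.1.1.2, hsS.1.2]
  have hinf := isMeasure_infMeasure hRDP hs'.1.1 hsS.1
  obtain ⟨t, ht, hinft⟩ :=
    hF.exists_eq_smul_of_le hinf hs (infMeasure_le_right hs'.1.1 hsS.1)
  have hinf0 : infMeasure P s' s = 0 := hinf.eq_zero_of_map_one <|
    hs'.2 t ht _ (hinf.2 _) (hinft ▸ infMeasure_le_left hs'.1.1 hsS.1)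
  rw [← hinf0]
  exact le_infMeasure_of_le (.of_mem_jordan hb) (hlb s' (by simp)) (hlb s (by simp))

theorem singularStates_eq_setOf_isGlbIn (hRDP : P.RDP) (hF : IsFace (States P) F) :
    singularStates P F = {s' | s' ∈ States P ∧ ∀ s ∈ F, IsGlbIn (Jordan P) {s', s} 0} := by
  ext s'
  refine ⟨fun hs' => ⟨hs'.1, fun s hs => isGlbIn_of_mem_singularStates hRDP hF hs' hs⟩,
    fun ⟨hs', hglb⟩ => ⟨hs', fun s hs α hα hle => ?_⟩⟩
  exact eq_zero_of_isGlbIn_of_smul_le (hF.2.subset hs) hs' (hglb s hs) hα hle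

end SingularStates

end PseudoEffectAlgebra

theorem stmt4_general {E : Type u} (P : PseudoEffectAlgebra E) (hRDP : P.RDP)
    (F : Set (E → ℝ)) (hF : IsFace (States P) F) :
    ComplFace (States P) F =
      {s' | s' ∈ States P ∧ ∀ s ∈ F, IsGlbIn (Jordan P) {s', s} 0} ∧
    ComplFace (States P) F =
      {s' | s' ∈ States P ∧ ∀ s ∈ F, ∀ α : ℝ, 0 ≤ α → α • s ≤ s' → α = 0} := by
  have h := complFace_eq_singularStates hRDP hF
  exact ⟨h.trans (singularStates_eq_setOf_isGlbIn hRDP hF), h⟩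

/-- For a face `F` of the nonempty state space of a pseudo effect algebra
with (RDP), the complementary face `F'` equals the set of states `s'` with `s' ∧ s = 0`
(infimum in `J(E)`) for all `s ∈ F`; equivalently, the set of states `s'` such that
`α • s ≤⁺ s'` with `s ∈ F`, `α ≥ 0` forces `α = 0`. -/
theorem stmt4 {E : Type u} (P : PseudoEffectAlgebra E) (hRDP : P.RDP)
    (hS : (States P).Nonempty) (F : Set (E → ℝ)) (hF : IsFace (States P) F) :
    ComplFace (States P) F =
      {s' | s' ∈ States P ∧ ∀ s ∈ F, IsGlbIn (Jordan P) {s', s} 0} ∧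
    ComplFace (States P) F =
      {s' | s' ∈ States P ∧ ∀ s ∈ F, ∀ α : ℝ, 0 ≤ α → α • s ≤ s' → α = 0} :=
  stmt4_general P hRDP F hF
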